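/- arXiv:1311.6247 — 7 statements merged into one kernel-verified Lean document; each statement's English description precedes it below -/
import Mathlib

section
/- For all SNR > 0, the gap R_DPC − R_QMF = log₂(1+SNR) − log₂(1 + SNR²/(1+2·SNR)) equals log₂(1 + SNR/(1+SNR)) and is at most 1. -/
theorem dpc_qmf_gap (SNR : ℝ) (h : 0 < SNR) :
    Real.logb 2 (1 + SNR) - Real.logb 2 (1 + SNR ^ 2 / (1 + 2 * SNR)) =
        Real.logb 2 (1 + SNR / (1 + SNR)) ∧
      Real.logb 2 (1 + SNR) - Real.logb 2 (1 + SNR ^ 2 / (1 + 2 * SNR)) ≤ 1 := by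
  have h1 : (0:ℝ) < 1 + SNR := by linarith
  have h2 : (0:ℝ) < 1 + 2 * SNR := by linarith
  have e1 : 1 + SNR ^ 2 / (1 + 2 * SNR) = (1 + SNR) ^ 2 / (1 + 2 * SNR) := by
    field_simp; ring
  have e2 : 1 + SNR / (1 + SNR) = (1 + 2 * SNR) / (1 + SNR) := by
    field_simp; ring
  have key : Real.logb 2 (1 + SNR) - Real.logb 2 (1 + SNR ^ 2 / (1 + 2 * SNR)) =
      Real.logb 2 (1 + SNR / (1 + SNR)) := by
    rw [e1, e2, Real.logb_div (by positivity) (by positivity),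
      Real.logb_pow, Real.logb_div (by positivity) (by positivity)]
    ring
  refine ⟨key, ?_⟩
  rw [key, e2]
  have : (1 + 2 * SNR) / (1 + SNR) ≤ 2 := by
    rw [div_le_iff₀ h1]; linarith
  calc Real.logb 2 ((1 + 2 * SNR) / (1 + SNR)) ≤ Real.logb 2 2 :=
        Real.logb_le_logb_of_le (by norm_num) (by positivity) this
    _ = 1 := Real.logb_self_eq_one (by norm_num)
end

section
/- For all SNR > 0 and all real γ, letting A = SNR²/(1+2·SNR), the gap log₂(1+A) − log₂(1 + A(1+SNR)/(1+(1+γ²)·SNR)) equals log₂(1 + γ²·A·SNR/(1+(1+γ²)·SNR + A(1+SNR))) and is at most log₂(1+γ²). -/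
theorem qmf_af_gap (SNR γ : ℝ) (h : 0 < SNR) :
    let A := SNR ^ 2 / (1 + 2 * SNR)
    Real.logb 2 (1 + A) - Real.logb 2 (1 + A * (1 + SNR) / (1 + (1 + γ ^ 2) * SNR)) =
        Real.logb 2 (1 + γ ^ 2 * A * SNR / (1 + (1 + γ ^ 2) * SNR + A * (1 + SNR))) ∧
      Real.logb 2 (1 + A) - Real.logb 2 (1 + A * (1 + SNR) / (1 + (1 + γ ^ 2) * SNR)) ≤
        Real.logb 2 (1 + γ ^ 2) := by
  intro A
  have h2 : (0:ℝ) < 1 + 2 * SNR := by linarith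
  have hA : 0 < A := div_pos (by positivity) h2
  have hD : 0 < 1 + (1 + γ ^ 2) * SNR := by nlinarith [sq_nonneg γ]
  have hden : 0 < 1 + (1 + γ ^ 2) * SNR + A * (1 + SNR) := by nlinarith
  have hx : 0 < 1 + A := by linarith
  have hy : 0 < 1 + A * (1 + SNR) / (1 + (1 + γ ^ 2) * SNR) := by positivity
  have key : (1 + A) / (1 + A * (1 + SNR) / (1 + (1 + γ ^ 2) * SNR)) =
      1 + γ ^ 2 * A * SNR / (1 + (1 + γ ^ 2) * SNR + A * (1 + SNR)) := by
    field_simp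
    ring
  constructor
  · rw [← Real.logb_div hx.ne' hy.ne', key]
  · rw [← Real.logb_div hx.ne' hy.ne', key]
    apply Real.logb_le_logb_of_le one_lt_two (by positivity)
    have : γ ^ 2 * A * SNR / (1 + (1 + γ ^ 2) * SNR + A * (1 + SNR)) ≤ γ ^ 2 := by
      rw [div_le_iff₀ hden]
      nlinarith [sq_nonneg γ]
    linarith
end

section
/- Let R_QMF = log₂(1 + SNR²/(1+2·SNR)) be the QMF achievable rate and R_QMF-N = log₂(1+SNR) − 1 the QMF achievable rate with noise-level quantization. Then for all SNR ≥ 1, R_QMF − R_QMF-N ≤ 1/2, i.e., log₂(1+SNR) − 1 ≥ log₂(1 + SNR²/(1+2·SNR)) − 1/2. -/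
theorem qmf_noise_level_gap (SNR : ℝ) (h : 1 ≤ SNR) :
    Real.logb 2 (1 + SNR) - 1 ≥ Real.logb 2 (1 + SNR ^ 2 / (1 + 2 * SNR)) - 1 / 2 := by
  have h1 : (0:ℝ) < 1 + SNR := by linarith
  have h2 : (0:ℝ) < 1 + 2 * SNR := by linarith
  have key : 1 + SNR ^ 2 / (1 + 2 * SNR) = (1 + SNR) ^ 2 / (1 + 2 * SNR) := by
    field_simp; ring
  rw [key, Real.logb_div (by positivity) h2.ne', Real.logb_pow]
  suffices hs : Real.logb 2 (1 + 2 * SNR) - Real.logb 2 (1 + SNR) ≥ 1 / 2 by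
    push_cast; linarith
  rw [← Real.logb_div h2.ne' h1.ne']
  have hsqrt : Real.sqrt 2 ≤ (1 + 2 * SNR) / (1 + SNR) := by
    have h32 : Real.sqrt 2 ≤ 3 / 2 := by
      nlinarith [Real.sq_sqrt (by norm_num : (0:ℝ) ≤ 2), Real.sqrt_nonneg 2]
    have : (3:ℝ) / 2 ≤ (1 + 2 * SNR) / (1 + SNR) := by
      rw [le_div_iff₀ h1]; linarith
    linarith
  have := Real.logb_le_logb_of_le (by norm_num : (1:ℝ) < 2) (Real.sqrt_pos.mpr (by norm_num)) hsqrt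
  have hval : Real.logb 2 (Real.sqrt 2) = 1 / 2 := by
    rw [show Real.sqrt 2 = (2:ℝ) ^ ((1:ℝ)/2) from Real.sqrt_eq_rpow 2,
      Real.logb_rpow (by norm_num) (by norm_num)]
  linarith
end

section
/- For all SNR > 0 and integers K ≥ 1, R^(1)_QMF − R^(K)_QMF = log₂( (Σ_{i=0}^{K}(1+SNR)^{K−i}·SNR^i) / ((1+SNR)^{K−1}(1+2·SNR)) ), where R^(K)_QMF = log₂(1 + SNR^{K+1}/((1+SNR)^{K+1} − SNR^{K+1})). Moreover this gap is bounded above by log₂(K+1). -/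
open Finset Real

lemma geom_fact (S : ℝ) (K : ℕ) :
    (1 + S) ^ (K + 1) - S ^ (K + 1) =
      ∑ i ∈ Finset.range (K + 1), (1 + S) ^ (K - i) * S ^ i := by
  have h := geom_sum₂_mul (1 + S) S (K + 1)
  have h2 : (1 + S) - S = 1 := by ring
  rw [h2, mul_one] at h
  rw [← h, ← Finset.sum_range_reflect]
  apply Finset.sum_congr rfl
  intro i hi
  have hi' : i ≤ K := Nat.lt_succ_iff.mp (Finset.mem_range.mp hi)
  have e1 : K + 1 - 1 - i = K - i := by omega
  have e2 : K + 1 - 1 - (K - i) = i := by omega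
  rw [e1, e2]

theorem qmf_multihop_gap (SNR : ℝ) (hs : 0 < SNR) (K : ℕ) (hK : 1 ≤ K)
    (R : ℕ → ℝ)
    (hR : ∀ k : ℕ, R k = Real.logb 2 (1 + SNR ^ (k + 1) / ((1 + SNR) ^ (k + 1) - SNR ^ (k + 1)))) :
    R 1 - R K =
        Real.logb 2 ((∑ i ∈ Finset.range (K + 1), (1 + SNR) ^ (K - i) * SNR ^ i) /
          ((1 + SNR) ^ (K - 1) * (1 + 2 * SNR))) ∧
      R 1 - R K ≤ Real.logb 2 (K + 1) := by
  set S := SNR with hSdef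
  have h1S : (0:ℝ) < 1 + S := by linarith
  have hD : ∀ k : ℕ, 0 < (1 + S) ^ (k + 1) - S ^ (k + 1) := by
    intro k
    have : S ^ (k + 1) < (1 + S) ^ (k + 1) :=
      pow_lt_pow_left₀ (by linarith) hs.le (Nat.succ_ne_zero k)
    linarith
  have hRk : ∀ k : ℕ, R k =
      Real.logb 2 ((1 + S) ^ (k + 1) / ((1 + S) ^ (k + 1) - S ^ (k + 1))) := by
    intro k
    rw [hR k]
    congr 1
    have h := (hD k).ne'
    field_simp
    ring
  have hD1 : (1 + S) ^ (1 + 1) - S ^ (1 + 1) = 1 + 2 * S := by ring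
  have h2S : (0:ℝ) < 1 + 2 * S := by linarith
  have hC : (0:ℝ) < (1 + S) ^ (K - 1) * (1 + 2 * S) := by positivity
  have hsum := geom_fact S K
  have hsumpos : (0:ℝ) < ∑ i ∈ Finset.range (K + 1), (1 + S) ^ (K - i) * S ^ i := by
    rw [← hsum]; exact hD K
  have hpow : (1 + S) ^ (K + 1) = (1 + S) ^ (K - 1) * (1 + S) ^ 2 := by
    rw [← pow_add]; congr 1; omega
  have heq : R 1 - R K =
      Real.logb 2 ((∑ i ∈ Finset.range (K + 1), (1 + S) ^ (K - i) * S ^ i) /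
        ((1 + S) ^ (K - 1) * (1 + 2 * S))) := by
    rw [hRk 1, hRk K, ← Real.logb_div (div_pos (by positivity) (hD 1)).ne' (div_pos (by positivity) (hD K)).ne']
    congr 1
    rw [hD1, ← hsum]
    have hDK := (hD K).ne'
    field_simp
    rw [hpow]; ring
  refine ⟨heq, ?_⟩
  rw [heq]
  have hratio : (∑ i ∈ Finset.range (K + 1), (1 + S) ^ (K - i) * S ^ i) /
      ((1 + S) ^ (K - 1) * (1 + 2 * S)) ≤ (K : ℝ) + 1 := by
    rw [div_le_iff₀ hC]
    have hterm : ∀ i ∈ Finset.range (K + 1),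
        (1 + S) ^ (K - i) * S ^ i ≤ (1 + S) ^ (K - 1) * (1 + 2 * S) := by
      intro i hi
      have hi' : i ≤ K := Nat.lt_succ_iff.mp (Finset.mem_range.mp hi)
      have h1 : S ^ i ≤ (1 + S) ^ i := pow_le_pow_left₀ hs.le (by linarith) i
      have h2 : (1 + S) ^ (K - i) * S ^ i ≤ (1 + S) ^ K := by
        calc (1 + S) ^ (K - i) * S ^ i ≤ (1 + S) ^ (K - i) * (1 + S) ^ i :=
              mul_le_mul_of_nonneg_left h1 (by positivity)
          _ = (1 + S) ^ K := by rw [← pow_add]; congr 1; omega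
      have h3 : (1 + S) ^ K ≤ (1 + S) ^ (K - 1) * (1 + 2 * S) := by
        have : (1 + S) ^ K = (1 + S) ^ (K - 1) * (1 + S) := by
          rw [← pow_succ]; congr 1; omega
        rw [this]
        exact mul_le_mul_of_nonneg_left (by linarith) (by positivity)
      linarith
    calc (∑ i ∈ Finset.range (K + 1), (1 + S) ^ (K - i) * S ^ i)
        ≤ ∑ _i ∈ Finset.range (K + 1), (1 + S) ^ (K - 1) * (1 + 2 * S) :=
          Finset.sum_le_sum hterm
      _ = ((K : ℝ) + 1) * ((1 + S) ^ (K - 1) * (1 + 2 * S)) := by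
          rw [Finset.sum_const, Finset.card_range]
          push_cast [nsmul_eq_mul]; ring
  exact Real.logb_le_logb_of_le (by norm_num) (div_pos hsumpos hC) hratio
end

section
/- For all SNR > 0 and real γ > 0, with α_opt = SNR(γ/⌈γ⌉ + γ⌈γ⌉) / (1 + SNR(γ/⌈γ⌉)² + SNR·γ²), substituting α = α_opt into σ²_eff(α) = SNR(|α·γ/⌈γ⌉ − 1|² + |αγ − ⌈γ⌉|²) + |α|² yields SNR/σ²_eff(α_opt) = 1/(1+⌈γ⌉²) + (γ²/⌈γ⌉²)·SNR. -/
theorem cof_pa_mmse (SNR γ : ℝ) (hs : 0 < SNR) (hγ : 0 < γ)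
    (α : ℝ)
    (hα : α = SNR * (γ / (⌈γ⌉ : ℝ) + γ * (⌈γ⌉ : ℝ)) /
      (1 + SNR * (γ / (⌈γ⌉ : ℝ)) ^ 2 + SNR * γ ^ 2)) :
    SNR / (SNR * (|α * γ / (⌈γ⌉ : ℝ) - 1| ^ 2 + |α * γ - (⌈γ⌉ : ℝ)| ^ 2) + |α| ^ 2) =
      1 / (1 + (⌈γ⌉ : ℝ) ^ 2) + γ ^ 2 / (⌈γ⌉ : ℝ) ^ 2 * SNR := by
  have hc : (0:ℝ) < (⌈γ⌉ : ℝ) := by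
    exact_mod_cast Int.lt_iff_add_one_le.mpr (by simpa using Int.ceil_pos.mpr hγ)
  have hc0 : ((⌈γ⌉ : ℝ)) ≠ 0 := ne_of_gt hc
  have hD : (0:ℝ) < 1 + SNR * (γ / (⌈γ⌉ : ℝ)) ^ 2 + SNR * γ ^ 2 := by positivity
  have hD0 := ne_of_gt hD
  rw [sq_abs, sq_abs, sq_abs, hα]
  have hE : (0:ℝ) < SNR * ((SNR * (γ / (⌈γ⌉ : ℝ) + γ * (⌈γ⌉ : ℝ)) /
      (1 + SNR * (γ / (⌈γ⌉ : ℝ)) ^ 2 + SNR * γ ^ 2)) * γ / (⌈γ⌉ : ℝ) - 1) ^ 2 +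
      SNR * ((SNR * (γ / (⌈γ⌉ : ℝ) + γ * (⌈γ⌉ : ℝ)) /
      (1 + SNR * (γ / (⌈γ⌉ : ℝ)) ^ 2 + SNR * γ ^ 2)) * γ - (⌈γ⌉ : ℝ)) ^ 2 +
      (SNR * (γ / (⌈γ⌉ : ℝ) + γ * (⌈γ⌉ : ℝ)) /
      (1 + SNR * (γ / (⌈γ⌉ : ℝ)) ^ 2 + SNR * γ ^ 2)) ^ 2 := by positivity
  field_simp
  ring
end

section
/- Let q be an element of a field and let u : ℕ → V (V a vector space over the field) satisfy u^{(K)} and u^{(K−1)} coupled by u^{(K)}_{t+1} − q·u^{(K)}_t = u^{(K−1)}_t for all t, for K ≥ 2, with base case u^{(1)}_{t+1} = Σ_{ℓ=1}^{t} q^{t−ℓ}·w_ℓ. Then for every K ≥ 1 and t: Σ_{ℓ=1}^{K} (−q)^{ℓ−1}·binom(K−1, ℓ−1)·u^{(K)}_{t−ℓ+K+1} = Σ_{ℓ=1}^{t} q^{t−ℓ}·w_ℓ. -/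
/-!
With `S` the shift operator on sequences, the recursion says `(S - q) u⁽ᴷ⁾ = u⁽ᴷ⁻¹⁾`, hence
`(S - q)^(K-1) u⁽ᴷ⁾ = u⁽¹⁾`. Since `S` commutes with scalars, the binomial theorem expands
`(S - q)^(K-1)` into exactly the binomially weighted window sum on the left-hand side.
-/

open Finset

namespace Sequence

variable {F V : Type*} [Field F] [AddCommGroup V] [Module F V]

variable (F V) in
def shift : Module.End F (ℕ → V) := LinearMap.funLeft F V (· + 1)

@[simp] lemma shift_apply (v : ℕ → V) (t : ℕ) : shift F V v t = v (t + 1) := rfl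

@[simp] lemma shift_pow_apply (n : ℕ) (v : ℕ → V) (t : ℕ) : (shift F V ^ n) v t = v (t + n) := by
  induction n generalizing t with
  | zero => rfl
  | succ n ih => rw [pow_succ', Module.End.mul_apply, shift_apply, ih, add_right_comm, add_assoc]

lemma sub_smul_one_apply (q : F) (v : ℕ → V) (t : ℕ) :
    (shift F V - q • 1) v t = v (t + 1) - q • v t := rfl

lemma sub_smul_one_pow_apply (q : F) (n : ℕ) (v : ℕ → V) (t : ℕ) :
    ((shift F V - q • 1) ^ n) v t =
      ∑ m ∈ range (n + 1), ((-q) ^ m * n.choose m) • v (t + (n - m)) := by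
  have hD : shift F V - q • 1 = algebraMap F _ (-q) + shift F V := by
    rw [map_neg, Algebra.algebraMap_eq_smul_one]; abel
  rw [hD, (Algebra.commute_algebraMap_left _ _).add_pow, LinearMap.sum_apply, Finset.sum_apply]
  refine sum_congr rfl fun m _ => ?_
  rw [← map_pow, ← map_natCast (algebraMap F _), mul_assoc, ← Algebra.commutes, ← mul_assoc,
    ← map_mul, Module.End.mul_apply, Module.algebraMap_end_apply, Pi.smul_apply, shift_pow_apply]

lemma sub_smul_one_pow_apply_succ_eq {q : F} {u : ℕ → ℕ → V}
    (hrec : ∀ K : ℕ, 2 ≤ K → ∀ t : ℕ, u K (t + 1) - q • u K t = u (K - 1) t) (k : ℕ) :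
    ((shift F V - q • 1) ^ k) (u (k + 1)) = u 1 := by
  induction k with
  | zero => rfl
  | succ k ih =>
    have hstep : (shift F V - q • 1) (u (k + 2)) = u (k + 1) :=
      funext fun t => by rw [sub_smul_one_apply, hrec (k + 2) le_add_self]; rfl
    rw [pow_succ, Module.End.mul_apply, hstep, ih]

end Sequence

open Sequence in
theorem cof_sliding_window_identity {F : Type*} [Field F] {V : Type*} [AddCommGroup V]
    [Module F V] (q : F) (w : ℕ → V) (u : ℕ → ℕ → V)
    (hbase : ∀ t : ℕ, u 1 (t + 1) = ∑ ℓ ∈ Finset.Icc 1 t, q ^ (t - ℓ) • w ℓ)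
    (hrec : ∀ K : ℕ, 2 ≤ K → ∀ t : ℕ, u K (t + 1) - q • u K t = u (K - 1) t) :
    ∀ K : ℕ, 1 ≤ K → ∀ t : ℕ,
      ∑ ℓ ∈ Finset.Icc 1 K,
          ((-q) ^ (ℓ - 1) * (Nat.choose (K - 1) (ℓ - 1) : F)) • u K (t + K + 1 - ℓ) =
        ∑ ℓ ∈ Finset.Icc 1 t, q ^ (t - ℓ) • w ℓ := by
  intro K hK t
  obtain ⟨k, rfl⟩ := Nat.exists_eq_add_of_le' hK
  have hIcc : Icc 1 (k + 1) = (Icc 0 k).map (addRightEmbedding 1) := by simp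
  rw [← hbase, ← sub_smul_one_pow_apply_succ_eq hrec k, sub_smul_one_pow_apply,
    Nat.range_succ_eq_Icc_zero, hIcc, sum_map]
  refine sum_congr rfl fun m hm => ?_
  have hmk : m ≤ k := (mem_Icc.mp hm).2
  simp only [addRightEmbedding_apply, Nat.add_sub_cancel]
  congr 2
  omega
end

section
/- Under the setting of the sliding-window decoding lemma, for every K ≥ 1 and t ≥ 1: w_t = Σ_{ℓ=1}^{K+1} (−q)^{ℓ−1}·binom(K, ℓ−1)·u^{(K)}_{t−ℓ+K+1}. -/
private lemma cof_key {F : Type*} [Field F] {V : Type*} [AddCommGroup V]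
    [Module F V] (q : F) (w : ℕ → V) (u : ℕ → ℕ → V)
    (hbase : ∀ t : ℕ, u 1 (t + 1) = ∑ ℓ ∈ Finset.Icc 1 t, q ^ (t - ℓ) • w ℓ)
    (hrec : ∀ K : ℕ, 2 ≤ K → ∀ t : ℕ, u K (t + 1) - q • u K t = u (K - 1) t) :
    ∀ K : ℕ, 1 ≤ K → ∀ t : ℕ, 1 ≤ t →
      w t = ∑ j ∈ Finset.range (K + 1),
        ((-q) ^ j * (Nat.choose K j : F)) • u K (t + K - j) := by
  intro K hK
  induction K, hK using Nat.le_induction with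
  | base =>
    intro t ht
    rw [Finset.sum_range_succ, Finset.sum_range_succ, Finset.sum_range_zero]
    simp only [pow_zero, pow_one, Nat.choose_self, Nat.choose_zero_right, Nat.cast_one,
      one_mul, mul_one, one_smul, zero_add]
    -- goal: w t = u 1 (t + 1 - 0) + (-q) • u 1 (t + 1 - 1)
    obtain ⟨s, rfl⟩ : ∃ s, t = s + 1 := ⟨t - 1, by omega⟩
    have h1 := hbase (s + 1)
    have h2 := hbase s
    rw [show s + 1 + 1 - 0 = s + 1 + 1 by omega, show s + 1 + 1 - 1 = s + 1 by omega,
      h1, h2, Finset.sum_Icc_succ_top (by omega : 1 ≤ s + 1)]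
    have : ∑ ℓ ∈ Finset.Icc 1 s, q ^ (s + 1 - ℓ) • w ℓ
        = q • ∑ ℓ ∈ Finset.Icc 1 s, q ^ (s - ℓ) • w ℓ := by
      rw [Finset.smul_sum]
      refine Finset.sum_congr rfl fun ℓ hl => ?_
      rw [Finset.mem_Icc] at hl
      rw [smul_smul, ← pow_succ', show s - ℓ + 1 = s + 1 - ℓ by omega]
    rw [this]
    simp [neg_smul]
  | succ K hK ih =>
    intro t ht
    have hr : ∀ s : ℕ, u (K + 1) (s + 1) - q • u (K + 1) s = u K s := by
      intro s
      have := hrec (K + 1) (by omega) s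
      simpa using this
    have step1 : w t = ∑ j ∈ Finset.range (K + 1),
        ((-q) ^ j * (Nat.choose K j : F)) •
          (u (K + 1) (t + K - j + 1) - q • u (K + 1) (t + K - j)) := by
      rw [ih t ht]
      exact Finset.sum_congr rfl fun j hj => by rw [hr]
    rw [step1]
    have split : ∀ j ∈ Finset.range (K + 1),
        ((-q) ^ j * (Nat.choose K j : F)) •
          (u (K + 1) (t + K - j + 1) - q • u (K + 1) (t + K - j))
        = ((-q) ^ j * (Nat.choose K j : F)) • u (K + 1) (t + K + 1 - j)
          + ((-q) ^ (j + 1) * (Nat.choose K j : F)) • u (K + 1) (t + K - j) := by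
      intro j hj
      rw [Finset.mem_range] at hj
      rw [show t + K - j + 1 = t + K + 1 - j by omega]
      rw [smul_sub, smul_smul, sub_eq_add_neg, ← neg_smul]
      congr 2
      ring
    rw [Finset.sum_congr rfl split, Finset.sum_add_distrib]
    -- A + B' where
    -- A = ∑ j ∈ range (K+1), ((-q)^j * C K j) • u (K+1) (t+K+1-j)
    -- B' = ∑ j ∈ range (K+1), ((-q)^(j+1) * C K j) • u (K+1) (t+K-j)
    -- Goal RHS: ∑ j ∈ range (K+2), ((-q)^j * C (K+1) j) • u (K+1) (t+(K+1)-j)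
    rw [Finset.sum_range_succ' (fun j => ((-q) ^ j * (Nat.choose (K+1) j : F)) • u (K + 1) (t + (K + 1) - j)) (K+1)]
    simp only [Nat.choose_zero_right, Nat.cast_one, pow_zero, one_mul, Nat.sub_zero]
    -- peeled: ∑ j ∈ range (K+1), ((-q)^(j+1) * C (K+1) (j+1)) • u (K+1) (t+K+1-(j+1)) + u (K+1) (t+K+1)
    have pascal : ∀ j ∈ Finset.range (K + 1),
        ((-q) ^ (j + 1) * (Nat.choose (K + 1) (j + 1) : F)) • u (K + 1) (t + (K + 1) - (j + 1))
        = ((-q) ^ (j + 1) * (Nat.choose K (j + 1) : F)) • u (K + 1) (t + K - j)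
          + ((-q) ^ (j + 1) * (Nat.choose K j : F)) • u (K + 1) (t + K - j) := by
      intro j hj
      rw [show t + (K + 1) - (j + 1) = t + K - j by omega, ← add_smul, Nat.choose_succ_succ',
        Nat.cast_add]
      ring_nf
    rw [Finset.sum_congr rfl pascal, Finset.sum_add_distrib]
    -- Now: A + B' = (C + B') + v0 where C = ∑ range(K+1), ((-q)^(j+1) * C K (j+1)) • u(K+1)(t+K-j)
    have hA : ∑ j ∈ Finset.range (K + 1), ((-q) ^ j * (Nat.choose K j : F)) • u (K + 1) (t + K + 1 - j)
        = (∑ j ∈ Finset.range (K + 1), ((-q) ^ (j + 1) * (Nat.choose K (j + 1) : F)) • u (K + 1) (t + K - j))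
          + u (K + 1) (t + K + 1) := by
      rw [Finset.sum_range_succ' (fun j => ((-q) ^ j * (Nat.choose K j : F)) • u (K + 1) (t + K + 1 - j)) K]
      simp only [Nat.choose_zero_right, Nat.cast_one, pow_zero, one_mul, Nat.sub_zero, one_smul]
      congr 1
      rw [Finset.sum_range_succ]
      simp only [Nat.choose_succ_self, Nat.cast_zero, mul_zero, zero_smul, add_zero]
      refine Finset.sum_congr rfl fun j hj => ?_
      rw [Finset.mem_range] at hj
      rw [show t + K + 1 - (j + 1) = t + K - j by omega]
    rw [hA]
    simp only [one_smul, ← add_assoc]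
    abel

theorem cof_sliding_window_decoding {F : Type*} [Field F] {V : Type*} [AddCommGroup V]
    [Module F V] (q : F) (w : ℕ → V) (u : ℕ → ℕ → V)
    (hbase : ∀ t : ℕ, u 1 (t + 1) = ∑ ℓ ∈ Finset.Icc 1 t, q ^ (t - ℓ) • w ℓ)
    (hrec : ∀ K : ℕ, 2 ≤ K → ∀ t : ℕ, u K (t + 1) - q • u K t = u (K - 1) t) :
    ∀ K : ℕ, 1 ≤ K → ∀ t : ℕ, 1 ≤ t →
      w t = ∑ ℓ ∈ Finset.Icc 1 (K + 1),
        ((-q) ^ (ℓ - 1) * (Nat.choose K (ℓ - 1) : F)) • u K (t + K + 1 - ℓ) := by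
  intro K hK t ht
  rw [cof_key q w u hbase hrec K hK t ht]
  refine Finset.sum_bij' (fun j _ => j + 1) (fun ℓ _ => ℓ - 1) ?_ ?_ ?_ ?_ ?_
  · intro j hj; rw [Finset.mem_range] at hj; rw [Finset.mem_Icc]; omega
  · intro ℓ hl; rw [Finset.mem_Icc] at hl; rw [Finset.mem_range]; omega
  · intro j hj; simp
  · intro ℓ hl; rw [Finset.mem_Icc] at hl; omega
  · intro j hj
    rw [Finset.mem_range] at hj
    rw [Nat.add_sub_cancel, show t + K + 1 - (j + 1) = t + K - j by omega]
end
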